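/- arXiv:2211.11473 — 2 statements merged into one kernel-verified Lean document; each statement's English description precedes it below -/
import Mathlib

section
/- Let (E, F) be a resistance form on a set X whose resistance metric R is complete and such that (X,R) is doubling and uniformly perfect. Let d be a metric on X with d ∼_QS R, and let μ be a Borel measure on X with the volume doubling property with respect to d. Define R̄_d(x,r) := sup_{y ∈ B_d(x,r)} R(x,y) and h(x,r) := μ(B_d(x,r))·R̄_d(x,r). Then: (a) there exists C > 0 with h(x,2r) ≤ C·h(x,r) for every x ∈ X and r > 0; and (b) there exists γ₂ > 1 with h(x, r/γ₂) ≤ h(x,r)/2 for every x ∈ X and r ∈ (0, diam(X,d)). -/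
open Filter Set Metric
open scoped ENNReal Topology

/-- A resistance form `(E, F)` on a set `X` (Kigami):
`F` is a linear subspace of the real-valued functions on `X`, `E` is a nonnegative
symmetric bilinear form on `F` such that (RF1) constants belong to `F` and
`E(u,u) = 0` iff `u` is constant, (RF2) the quotient of `F` by the constants is a
Hilbert space under `E` (stated as completeness of the `E`-seminorm on `F`),
(RF3) points of `X` are separated by `F`, (RF4) for `x ≠ y` the quantity
`R(x,y) = (inf {E(u,u) : u ∈ F, u x = 1, u y = 0})⁻¹` is finite (i.e. the infimum
is positive; an admissible `u` always exists), and (RF5) the Markov property holds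
for the unit truncation. -/
structure ResistanceForm (X : Type*) where
  F : Set (X → ℝ)
  E : (X → ℝ) → (X → ℝ) → ℝ
  zero_mem : (0 : X → ℝ) ∈ F
  add_mem : ∀ {u v : X → ℝ}, u ∈ F → v ∈ F → u + v ∈ F
  smul_mem : ∀ (c : ℝ) {u : X → ℝ}, u ∈ F → c • u ∈ F
  const_mem : ∀ c : ℝ, (fun _ => c) ∈ F
  symm : ∀ u ∈ F, ∀ v ∈ F, E u v = E v u
  add_left : ∀ u ∈ F, ∀ v ∈ F, ∀ w ∈ F, E (u + v) w = E u w + E v w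
  smul_left : ∀ (c : ℝ), ∀ u ∈ F, ∀ v ∈ F, E (c • u) v = c * E u v
  nonneg : ∀ u ∈ F, 0 ≤ E u u
  null_iff_const : ∀ u ∈ F, (E u u = 0 ↔ ∃ c : ℝ, ∀ x, u x = c)
  complete : ∀ u : ℕ → (X → ℝ), (∀ n, u n ∈ F) →
    (∀ ε : ℝ, 0 < ε → ∃ N : ℕ, ∀ m ≥ N, ∀ n ≥ N, E (u m - u n) (u m - u n) < ε) →
    ∃ v ∈ F, ∀ ε : ℝ, 0 < ε → ∃ N : ℕ, ∀ n ≥ N, E (v - u n) (v - u n) < ε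
  sep : ∀ x y : X, x ≠ y → ∃ u ∈ F, u x ≠ u y
  exists_unit : ∀ x y : X, x ≠ y → ∃ u ∈ F, u x = 1 ∧ u y = 0
  inf_pos : ∀ x y : X, x ≠ y →
    0 < sInf {e : ℝ | ∃ u ∈ F, u x = 1 ∧ u y = 0 ∧ E u u = e}
  markov : ∀ u ∈ F, (fun x => max 0 (min 1 (u x))) ∈ F ∧
    E (fun x => max 0 (min 1 (u x))) (fun x => max 0 (min 1 (u x))) ≤ E u u

namespace ResistanceForm

variable {X : Type*}

open Classical in
/-- The resistance metric `R` associated with a resistance form: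
`R(x,x) = 0` and `R(x,y) = (inf {E(u,u) : u ∈ F, u x = 1, u y = 0})⁻¹` for `x ≠ y`. -/
noncomputable def rmetric (rf : ResistanceForm X) (x y : X) : ℝ :=
  if x = y then 0
  else (sInf {e : ℝ | ∃ u ∈ rf.F, u x = 1 ∧ u y = 0 ∧ rf.E u u = e})⁻¹

open Classical in
/-- The resistance `𝓡(A,B)` between two sets: the reciprocal of the minimal energy of
functions that are `≡ 1` on `A` and `≡ 0` on `B` if such functions exist, `0` if no
such function exists, and `∞` if `A` or `B` is empty. -/
noncomputable def setRes (rf : ResistanceForm X) (A B : Set X) : ℝ≥0∞ :=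
  if A.Nonempty ∧ B.Nonempty then
    (if ∃ u ∈ rf.F, (∀ x ∈ A, u x = 1) ∧ (∀ x ∈ B, u x = 0) then
      (ENNReal.ofReal
        (sInf {e : ℝ | ∃ u ∈ rf.F, (∀ x ∈ A, u x = 1) ∧ (∀ x ∈ B, u x = 0) ∧ rf.E u u = e}))⁻¹
    else 0)
  else ⊤

end ResistanceForm

/-- A distance function `ρ` on `X` is doubling: there is `N ∈ ℕ` such that every ball of
radius `2r` is covered by `N` balls of radius `r`. -/
def DoublingOf {X : Type*} (ρ : X → X → ℝ) : Prop :=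
  ∃ N : ℕ, ∀ (x : X) (r : ℝ), ∃ s : Finset X, s.card ≤ N ∧
    {y : X | ρ x y < 2 * r} ⊆ ⋃ z ∈ s, {y : X | ρ z y < r}

/-- A distance function `ρ` on `X` is uniformly perfect: there is `γ > 1` such that
`B(x, γ r) \ B(x, r) ≠ ∅` whenever `B(x,r)` is not the whole space. -/
def UniformlyPerfectOf {X : Type*} (ρ : X → X → ℝ) : Prop :=
  ∃ γ : ℝ, 1 < γ ∧ ∀ (x : X) (r : ℝ), 0 < r → {y : X | ρ x y < r} ≠ Set.univ →
    ({y : X | ρ x y < γ * r} \ {y : X | ρ x y < r}).Nonempty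

/-- A measure `μ` on a (pseudo)metric space has the volume doubling property:
there is `C > 1` with `0 < μ(B(x,2r)) ≤ C · μ(B(x,r)) < ∞` for all `x` and `r > 0`. -/
def VolumeDoubling {Y : Type*} [PseudoMetricSpace Y] [MeasurableSpace Y] (μ : MeasureTheory.Measure Y) : Prop :=
  ∃ C : ℝ≥0∞, 1 < C ∧ C ≠ ⊤ ∧ ∀ (x : Y) (r : ℝ), 0 < r →
    0 < μ (Metric.ball x (2 * r)) ∧
    μ (Metric.ball x (2 * r)) ≤ C * μ (Metric.ball x r) ∧
    μ (Metric.ball x r) < ⊤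

/-- `d` is quasisymmetric to `ρ` (`d ∼_QS ρ`): there is a homeomorphism
`θ : [0,∞) → [0,∞)` with `ρ(x,y)/ρ(x,z) ≤ θ(d(x,y)/d(x,z))` whenever `x ≠ z`. -/
def QuasiSymmetric {X : Type*} (d ρ : X → X → ℝ) : Prop :=
  ∃ θ : ℝ → ℝ, ContinuousOn θ (Set.Ici 0) ∧ StrictMonoOn θ (Set.Ici 0) ∧ θ 0 = 0 ∧
    Set.MapsTo θ (Set.Ici 0) (Set.Ici 0) ∧ Set.SurjOn θ (Set.Ici 0) (Set.Ici 0) ∧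
    ∀ x y z : X, x ≠ z → ρ x y / ρ x z ≤ θ (d x y / d x z)

/-- Completeness of a distance function `ρ` on `X`: every `ρ`-Cauchy sequence
`ρ`-converges to some point of `X`. -/
def CompleteOf {X : Type*} (ρ : X → X → ℝ) : Prop :=
  ∀ u : ℕ → X, (∀ ε : ℝ, 0 < ε → ∃ N : ℕ, ∀ m ≥ N, ∀ n ≥ N, ρ (u m) (u n) < ε) →
    ∃ x : X, ∀ ε : ℝ, 0 < ε → ∃ N : ℕ, ∀ n ≥ N, ρ x (u n) < ε

/-!
Quasisymmetry turns comparisons of `d`-distances from `x` into comparisons of `R`-distances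
from `x`, with a factor that tends to `0` with the `d`-ratio. Hence uniform perfectness passes
from `R` to `d`: if no point had `d(x,·)` in `[r, γr)`, take `w` nearly closest to `x` outside
`B_d(x,r)`; the points of `B_d(x,r)` are then `R`-much closer to `x` than `w`, all others are
not much `R`-closer than `w`, and an `R`-annulus around `x` of large ratio would be empty.
So every `d`-ball `B_d(x,r)` other than `X` contains a point `z` with `d(x,z) ≥ r/γ`, and
`R(x,z)` controls `R̄_d(x,2r)` up to a constant and `R̄_d(x,r/γ₂)` up to the factor `1/2` once
`γ₂` is large. Volume doubling and monotonicity of `μ` take care of the measure factor.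
-/

open MeasureTheory

namespace ResistanceForm

variable {X : Type*}

lemma rmetric_pos (rf : ResistanceForm X) {x y : X} (h : x ≠ y) : 0 < rf.rmetric x y := by
  rw [rmetric, if_neg h]
  exact inv_pos.mpr (rf.inf_pos x y h)

lemma rmetric_nonneg (rf : ResistanceForm X) (x y : X) : 0 ≤ rf.rmetric x y := by
  rcases eq_or_ne x y with rfl | h
  · simp [rmetric]
  · exact (rf.rmetric_pos h).le

end ResistanceForm

lemma Real.sSup_image_le_mul_sSup_image {α : Type*} {f : α → ℝ} {s t : Set α} {z : α}
    {K : ℝ} (hK : 0 ≤ K) (hfz : 0 ≤ f z) (hz : z ∈ t) (hbdd : BddAbove (f '' t))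
    (h : ∀ y ∈ s, f y ≤ K * f z) : sSup (f '' s) ≤ K * sSup (f '' t) := by
  have hz_le : f z ≤ sSup (f '' t) := le_csSup hbdd (mem_image_of_mem f hz)
  refine Real.sSup_le ?_ (mul_nonneg hK (hfz.trans hz_le))
  rintro _ ⟨y, hy, rfl⟩
  exact (h y hy).trans (mul_le_mul_of_nonneg_left hz_le hK)

lemma Metric.exists_mem_forall_dist_le_two_mul {X : Type*} [PseudoMetricSpace X] {s : Set X}
    {x : X} (hs : s.Nonempty) (hpos : 0 < infDist x s) :
    ∃ w ∈ s, ∀ y ∈ s, dist x w ≤ 2 * dist x y := by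
  obtain ⟨w, hw, hxw⟩ := (infDist_lt_iff hs).1 (show infDist x s < 2 * infDist x s by linarith)
  exact ⟨w, hw, fun y hy => hxw.le.trans (by linarith [infDist_le_dist_of_mem (x := x) hy])⟩

lemma Metric.ball_half_ne_univ_of_lt_ediam {X : Type*} [PseudoMetricSpace X] {r : ℝ}
    (hr : ENNReal.ofReal r < ediam (univ : Set X)) (x : X) : ball x (r / 2) ≠ univ := by
  intro h
  refine hr.not_ge (ediam_le_of_forall_dist_le fun p _ q _ => ?_)
  have hp : p ∈ ball x (r / 2) := h ▸ mem_univ p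
  have hq : q ∈ ball x (r / 2) := h ▸ mem_univ q
  linarith [dist_triangle_left p q x, mem_ball'.1 hp, mem_ball'.1 hq]

lemma VolumeDoubling.exists_toReal_ball_two_mul_le {X : Type*} [PseudoMetricSpace X]
    [MeasurableSpace X] {μ : Measure X} (hvd : VolumeDoubling μ) :
    ∃ C : ℝ, 0 < C ∧ ∀ (x : X) (r : ℝ), 0 < r → μ (ball x r) ≠ ⊤ ∧
      (μ (ball x (2 * r))).toReal ≤ C * (μ (ball x r)).toReal := by
  obtain ⟨C, hC1, hCtop, hC⟩ := hvd
  refine ⟨C.toReal, ENNReal.toReal_pos (zero_lt_one.trans hC1).ne' hCtop, fun x r hr => ?_⟩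
  obtain ⟨-, hdb, hfin⟩ := hC x r hr
  refine ⟨hfin.ne, ?_⟩
  rw [← ENNReal.toReal_mul]
  exact ENNReal.toReal_mono (ENNReal.mul_ne_top hCtop hfin.ne) hdb

section QuasiSymmetric

variable {X : Type*} [MetricSpace X] {ρ : X → X → ℝ}

lemma QuasiSymmetric.exists_control (hqs : QuasiSymmetric (fun x y : X => dist x y) ρ)
    (hρ : ∀ x y, x ≠ y → 0 < ρ x y) :
    ∃ θ : ℝ → ℝ, MonotoneOn θ (Ici 0) ∧ θ 0 = 0 ∧ SurjOn θ (Ici 0) (Ici 0) ∧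
      ∀ (x y z : X) (c : ℝ), x ≠ z → 0 ≤ c → dist x y ≤ c * dist x z →
        ρ x y ≤ θ c * ρ x z := by
  obtain ⟨θ, -, hmono, h0, -, hsurj, hθ⟩ := hqs
  refine ⟨θ, hmono.monotoneOn, h0, hsurj, fun x y z c hxz hc hxy => ?_⟩
  have hd := dist_pos.2 hxz
  have hratio := (hθ x y z hxz).trans
    (hmono.monotoneOn (div_nonneg dist_nonneg hd.le) hc ((div_le_iff₀ hd).2 hxy))
  exact (div_le_iff₀ (hρ x z hxz)).1 hratio

lemma QuasiSymmetric.exists_le_mul_of_dist_le_mul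
    (hqs : QuasiSymmetric (fun x y : X => dist x y) ρ) (hρ : ∀ x y, x ≠ y → 0 < ρ x y)
    {c : ℝ} (hc : 0 ≤ c) :
    ∃ K, 1 ≤ K ∧
      ∀ x y z : X, x ≠ z → dist x y ≤ c * dist x z → ρ x y ≤ K * ρ x z := by
  obtain ⟨θ, -, -, -, hθ⟩ := hqs.exists_control hρ
  refine ⟨max (θ c) 1, le_max_right _ _, fun x y z hxz hxy => ?_⟩
  exact (hθ x y z c hxz hc hxy).trans
    (mul_le_mul_of_nonneg_right (le_max_left _ _) (hρ x z hxz).le)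

lemma QuasiSymmetric.exists_le_eps_mul_of_dist_le_mul
    (hqs : QuasiSymmetric (fun x y : X => dist x y) ρ) (hρ : ∀ x y, x ≠ y → 0 < ρ x y)
    {ε : ℝ} (hε : 0 < ε) :
    ∃ δ > 0,
      ∀ x y z : X, x ≠ z → dist x y ≤ δ * dist x z → ρ x y ≤ ε * ρ x z := by
  obtain ⟨θ, hmono, h0, hsurj, hθ⟩ := hqs.exists_control hρ
  obtain ⟨δ, hδ, hθδ⟩ := hsurj (mem_Ici.2 hε.le)
  have hδ_pos : 0 < δ := (mem_Ici.1 hδ).lt_of_ne (by rintro rfl; linarith)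
  exact ⟨δ, hδ_pos, fun x y z hxz hxy => hθδ ▸ hθ x y z δ hxz hδ hxy⟩

lemma QuasiSymmetric.bddAbove_image_ball (hqs : QuasiSymmetric (fun x y : X => dist x y) ρ)
    (hρ : ∀ x y, x ≠ y → 0 < ρ x y) (x : X) {r : ℝ} (hr : 0 < r) :
    BddAbove (ρ x '' ball x r) := by
  by_cases hx : ∃ z, x ≠ z
  · obtain ⟨z, hxz⟩ := hx
    obtain ⟨θ, -, -, -, hθ⟩ := hqs.exists_control hρ
    have hd := dist_pos.2 hxz
    refine ⟨θ (r / dist x z) * ρ x z, ?_⟩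
    rintro _ ⟨y, hy, rfl⟩
    refine hθ x y z _ hxz (by positivity) ?_
    rw [div_mul_cancel₀ _ hd.ne']
    exact (mem_ball'.1 hy).le
  · simp only [ne_eq, not_exists, not_not] at hx
    refine (bddAbove_singleton (a := ρ x x)).mono ?_
    rintro _ ⟨y, -, rfl⟩
    rw [← hx y]
    rfl

theorem UniformlyPerfectOf.dist_of_quasiSymmetric (hup : UniformlyPerfectOf ρ)
    (hqs : QuasiSymmetric (fun x y : X => dist x y) ρ) (hρ : ∀ x y, x ≠ y → 0 < ρ x y) :
    UniformlyPerfectOf (fun x y : X => dist x y) := by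
  obtain ⟨γR, hγR, hupR⟩ := hup
  obtain ⟨K, hK1, hK⟩ := hqs.exists_le_mul_of_dist_le_mul hρ zero_le_two
  -- With this `ε`, the `R`-annulus `[s, γR s)` for `s = R(x,w) / (γR K)` below meets neither
  -- `B_d(x,r)` nor its complement.
  obtain ⟨δ, hδ, hsmall⟩ :=
    hqs.exists_le_eps_mul_of_dist_le_mul hρ (ε := (2 * γR * K)⁻¹) (by positivity)
  refine ⟨δ⁻¹ + 1, by linarith [inv_pos.2 hδ], fun x r hr hne => ?_⟩
  by_contra hgap
  set S := {y | r ≤ dist x y}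
  have hS : S.Nonempty := by
    obtain ⟨w, hw⟩ := (ne_univ_iff_exists_notMem _).1 hne
    exact ⟨w, (not_lt.1 hw : r ≤ dist x w)⟩
  have hfar : ∀ y ∈ S, (δ⁻¹ + 1) * r ≤ dist x y := fun y hy =>
    not_lt.1 fun h => hgap ⟨y, h, (not_lt.2 hy : ¬ dist x y < r)⟩
  obtain ⟨w, hwS, hw⟩ := exists_mem_forall_dist_le_two_mul hS
    ((by positivity : 0 < (δ⁻¹ + 1) * r).trans_le ((le_infDist hS).2 hfar))
  have hxw : x ≠ w := dist_pos.1 (hr.trans_le hwS)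
  have hρw := hρ x w hxw
  have hnear : ∀ y, dist x y < r → ρ x y ≤ (2 * γR * K)⁻¹ * ρ x w := by
    refine fun y hy => hsmall x y w hxw ?_
    have : δ * ((δ⁻¹ + 1) * r) = r + δ * r := by field_simp
    nlinarith [mul_le_mul_of_nonneg_left (hfar w hwS) hδ.le]
  have hfar_ρ : ∀ y ∈ S, ρ x w ≤ K * ρ x y := fun y hy =>
    hK x w y (dist_pos.1 (hr.trans_le hy)) (hw y hy)
  set s := ρ x w / (γR * K)
  have hs : 0 < s := by positivity
  have hs_mul : γR * K * s = ρ x w := by simp only [s]; field_simp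
  have hws : ¬ ρ x w < s :=
    not_lt.2 (div_le_self hρw.le (one_le_mul_of_one_le_of_one_le hγR.le hK1))
  obtain ⟨p, hp_lt, hp_ge⟩ :=
    hupR x s hs fun h => hws (show w ∈ {y | ρ x y < s} from h ▸ mem_univ w)
  simp only [mem_ofPred_eq, not_lt] at hp_lt hp_ge
  rcases lt_or_ge (dist x p) r with hpr | hpr
  · have : (2 * γR * K)⁻¹ * ρ x w = s / 2 := by rw [← hs_mul]; field_simp
    linarith [hnear p hpr]
  · have := mul_lt_mul_of_pos_left hp_lt (zero_lt_one.trans_le hK1)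
    linarith [hfar_ρ p hpr]

lemma UniformlyPerfectOf.exists_dist_mem_Ico
    (hup : UniformlyPerfectOf (fun x y : X => dist x y)) :
    ∃ γ, 1 < γ ∧ ∀ (x : X) (r : ℝ), 0 < r → ball x r ≠ univ →
      ∃ z, r / γ ≤ dist x z ∧ dist x z < r := by
  obtain ⟨γ, hγ, hup⟩ := hup
  have hγ0 : 0 < γ := by linarith
  refine ⟨γ, hγ, fun x r hr hne => ?_⟩
  have hsub : {y | dist x y < r / γ} ⊆ ball x r := fun y hy =>
    mem_ball'.2 (lt_of_lt_of_le hy (div_le_self hr.le hγ.le))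
  obtain ⟨z, hz_lt, hz_ge⟩ :=
    hup x (r / γ) (by positivity) fun h => hne (eq_univ_of_subset hsub h)
  simp only [mem_ofPred_eq, not_lt, mul_div_cancel₀ _ hγ0.ne'] at hz_lt hz_ge
  exact ⟨z, hz_ge, hz_lt⟩

lemma QuasiSymmetric.exists_sSup_image_ball_two_mul_le
    (hqs : QuasiSymmetric (fun x y : X => dist x y) ρ) (hρ : ∀ x y, x ≠ y → 0 < ρ x y)
    (hρ0 : ∀ x y, 0 ≤ ρ x y) (hup : UniformlyPerfectOf (fun x y : X => dist x y)) :
    ∃ K, 1 ≤ K ∧ ∀ (x : X) (r : ℝ), 0 < r →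
      sSup (ρ x '' ball x (2 * r)) ≤ K * sSup (ρ x '' ball x r) := by
  obtain ⟨γ, hγ, hupd⟩ := hup.exists_dist_mem_Ico
  obtain ⟨K, hK1, hK⟩ := hqs.exists_le_mul_of_dist_le_mul hρ (c := 2 * γ) (by positivity)
  refine ⟨K, hK1, fun x r hr => ?_⟩
  by_cases hfull : ball x r = univ
  · have h2 : ball x (2 * r) = univ := eq_univ_of_subset (ball_subset_ball (by linarith)) hfull
    rw [h2, hfull]
    exact le_mul_of_one_le_left (Real.sSup_nonneg (forall_mem_image.2 fun y _ => hρ0 x y)) hK1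
  · obtain ⟨z, hz_ge, hz_lt⟩ := hupd x r hr hfull
    have hxz : x ≠ z := dist_pos.1 ((by positivity : 0 < r / γ).trans_le hz_ge)
    refine Real.sSup_image_le_mul_sSup_image (by linarith) (hρ0 x z) (mem_ball'.2 hz_lt)
      (hqs.bddAbove_image_ball hρ x hr) fun y hy => hK x y z hxz ?_
    have : r ≤ γ * dist x z := (div_le_iff₀' (by linarith)).1 hz_ge
    linarith [mem_ball'.1 hy]

lemma QuasiSymmetric.exists_sSup_image_ball_div_le
    (hqs : QuasiSymmetric (fun x y : X => dist x y) ρ) (hρ : ∀ x y, x ≠ y → 0 < ρ x y)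
    (hρ0 : ∀ x y, 0 ≤ ρ x y) (hup : UniformlyPerfectOf (fun x y : X => dist x y)) :
    ∃ γ₂, 1 < γ₂ ∧
      ∀ (x : X) (r : ℝ), 0 < r → ENNReal.ofReal r < ediam (univ : Set X) →
      sSup (ρ x '' ball x (r / γ₂)) ≤ 2⁻¹ * sSup (ρ x '' ball x r) := by
  obtain ⟨γ, hγ, hupd⟩ := hup.exists_dist_mem_Ico
  obtain ⟨δ, hδ, hsmall⟩ :=
    hqs.exists_le_eps_mul_of_dist_le_mul hρ (ε := 2⁻¹) (by norm_num)
  have hγδ : 0 < 2 * γ / δ := by positivity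
  refine ⟨2 * γ / δ + 1, by linarith, fun x r hr hdiam => ?_⟩
  obtain ⟨z, hz_ge, hz_lt⟩ :=
    hupd x (r / 2) (by positivity) (ball_half_ne_univ_of_lt_ediam hdiam x)
  have hxz : x ≠ z := dist_pos.1 ((by positivity : 0 < r / 2 / γ).trans_le hz_ge)
  refine Real.sSup_image_le_mul_sSup_image (by norm_num) (hρ0 x z) (mem_ball'.2 (by linarith))
    (hqs.bddAbove_image_ball hρ x hr) fun y hy => hsmall x y z hxz ?_
  calc dist x y ≤ r / (2 * γ / δ + 1) := (mem_ball'.1 hy).le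
    _ ≤ r / (2 * γ / δ) := div_le_div_of_nonneg_left hr.le hγδ (by linarith)
    _ = δ * (r / 2 / γ) := by field_simp
    _ ≤ δ * dist x z := mul_le_mul_of_nonneg_left hz_ge hδ.le

end QuasiSymmetric

theorem h_doubling_and_reverse_doubling_general {X : Type*} [MetricSpace X] [MeasurableSpace X]
    (rf : ResistanceForm X)
    (hup : UniformlyPerfectOf rf.rmetric)
    (hqs : QuasiSymmetric (fun x y : X => dist x y) rf.rmetric)
    (μ : MeasureTheory.Measure X) (hvd : VolumeDoubling μ) :
    (∃ C : ℝ, 0 < C ∧ ∀ (x : X) (r : ℝ), 0 < r →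
      (μ (Metric.ball x (2 * r))).toReal * sSup (rf.rmetric x '' Metric.ball x (2 * r)) ≤
        C * ((μ (Metric.ball x r)).toReal * sSup (rf.rmetric x '' Metric.ball x r))) ∧
    (∃ γ₂ : ℝ, 1 < γ₂ ∧ ∀ (x : X) (r : ℝ), 0 < r →
      ENNReal.ofReal r < EMetric.diam (Set.univ : Set X) →
      (μ (Metric.ball x (r / γ₂))).toReal * sSup (rf.rmetric x '' Metric.ball x (r / γ₂)) ≤
        ((μ (Metric.ball x r)).toReal * sSup (rf.rmetric x '' Metric.ball x r)) / 2) := by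
  have hρ : ∀ x y, x ≠ y → 0 < rf.rmetric x y := fun _ _ => rf.rmetric_pos
  have hS : ∀ x s, 0 ≤ sSup (rf.rmetric x '' ball x s) := fun x _ =>
    Real.sSup_nonneg (forall_mem_image.2 fun y _ => rf.rmetric_nonneg x y)
  have hupd := hup.dist_of_quasiSymmetric hqs hρ
  obtain ⟨Cμ, hCμ, hμ⟩ := hvd.exists_toReal_ball_two_mul_le
  obtain ⟨K, hK1, hK⟩ := hqs.exists_sSup_image_ball_two_mul_le hρ rf.rmetric_nonneg hupd
  obtain ⟨γ₂, hγ₂, hhalf⟩ := hqs.exists_sSup_image_ball_div_le hρ rf.rmetric_nonneg hupd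
  refine ⟨⟨Cμ * K, by positivity, fun x r hr => ?_⟩,
    ⟨γ₂, hγ₂, fun x r hr hdiam => ?_⟩⟩
  · calc _ ≤ (Cμ * (μ (ball x r)).toReal) * (K * sSup (rf.rmetric x '' ball x r)) :=
          mul_le_mul (hμ x r hr).2 (hK x r hr) (hS x _) (by positivity)
      _ = _ := by ring
  · have hμ_mono : (μ (ball x (r / γ₂))).toReal ≤ (μ (ball x r)).toReal :=
      ENNReal.toReal_mono (hμ x r hr).1
        (measure_mono (ball_subset_ball (div_le_self hr.le hγ₂.le)))
    calc _ ≤ (μ (ball x r)).toReal * (2⁻¹ * sSup (rf.rmetric x '' ball x r)) :=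
          mul_le_mul hμ_mono (hhalf x r hr hdiam) (hS x _) ENNReal.toReal_nonneg
      _ = _ := by ring

/-- Let `(E,F)` be a resistance form whose resistance metric `R` is
complete, doubling and uniformly perfect, let `d` be a metric on `X` (the ambient metric)
with `d ∼_QS R`, and let `μ` be a Borel measure that is volume doubling with respect to
`d`.  With `R̄_d(x,r) = sup_{y ∈ B_d(x,r)} R(x,y)` and `h(x,r) = μ(B_d(x,r))·R̄_d(x,r)`:
(a) `h(x,2r) ≤ C·h(x,r)` for all `x` and `r > 0`;
(b) there is `γ₂ > 1` with `h(x,r/γ₂) ≤ h(x,r)/2` for all `x` and `r ∈ (0, diam(X,d))`. -/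
theorem h_doubling_and_reverse_doubling {X : Type*} [MetricSpace X] [MeasurableSpace X]
    [BorelSpace X]
    (rf : ResistanceForm X)
    (hcomp : CompleteOf rf.rmetric) (hdb : DoublingOf rf.rmetric)
    (hup : UniformlyPerfectOf rf.rmetric)
    (hqs : QuasiSymmetric (fun x y : X => dist x y) rf.rmetric)
    (μ : MeasureTheory.Measure X) (hvd : VolumeDoubling μ) :
    (∃ C : ℝ, 0 < C ∧ ∀ (x : X) (r : ℝ), 0 < r →
      (μ (Metric.ball x (2 * r))).toReal * sSup (rf.rmetric x '' Metric.ball x (2 * r)) ≤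
        C * ((μ (Metric.ball x r)).toReal * sSup (rf.rmetric x '' Metric.ball x r))) ∧
    (∃ γ₂ : ℝ, 1 < γ₂ ∧ ∀ (x : X) (r : ℝ), 0 < r →
      ENNReal.ofReal r < EMetric.diam (Set.univ : Set X) →
      (μ (Metric.ball x (r / γ₂))).toReal * sSup (rf.rmetric x '' Metric.ball x (r / γ₂)) ≤
        ((μ (Metric.ball x r)).toReal * sSup (rf.rmetric x '' Metric.ball x r)) / 2) :=
  h_doubling_and_reverse_doubling_general rf hup hqs μ hvd
end

section
/- Let V be a nonempty finite set and for each n ≥ 0 let (E_n, ℓ(V)) be a resistance form on V with associated resistance metric R_n. If for all x, y ∈ V with x ≠ y the limit R(x,y) := lim_{n→∞} R_n(x,y) exists and is positive, then there exists a resistance form (E, ℓ(V)) on V whose associated resistance metric coincides with R (extended by R(x,x)=0). -/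
open Filter Set Metric
open scoped ENNReal Topology

/-!
On a finite set, a resistance form with full domain is the energy
`½ ∑ₓ ∑ᵧ c(x,y) (u x - u y)²` of an electrical network whose conductances
`c(x,y) = -E(1ₓ, 1ᵧ)` are nonnegative by the Markov property, and its resistance metric is the
inverse of the effective conductance `inf {E(u,u) : u x = 1, u y = 0}`. As `c(x,y)` is at most the
effective conductance `R_n(x,y)⁻¹`, which converges, the conductances of the `E_n` are bounded and
a subsequence converges to some `c₀ ≥ 0`. By truncation the infimum may be taken over the compact
set of admissible `[0,1]`-valued functions, so effective conductance is continuous in `c ≥ 0`; hence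
`c₀` has effective conductances `R(x,y)⁻¹ > 0`, and this positivity is exactly what makes the
network energy of `c₀` a resistance form.
-/

section GraphEnergy

variable {V : Type*} [Fintype V]

noncomputable def graphEnergy (c : V → V → ℝ) (u v : V → ℝ) : ℝ :=
  (1 / 2) * ∑ x, ∑ y, c x y * (u x - u y) * (v x - v y)

variable {c : V → V → ℝ}

lemma graphEnergy_comm (u v : V → ℝ) : graphEnergy c u v = graphEnergy c v u := by
  simp only [graphEnergy, mul_right_comm _ (u _ - u _)]

lemma graphEnergy_add_left (u v w : V → ℝ) :
    graphEnergy c (u + v) w = graphEnergy c u w + graphEnergy c v w := by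
  simp only [graphEnergy, ← mul_add, ← Finset.sum_add_distrib, Pi.add_apply]
  congr 1
  refine Finset.sum_congr rfl fun x _ => Finset.sum_congr rfl fun y _ => ?_
  ring

lemma graphEnergy_smul_left (a : ℝ) (u v : V → ℝ) :
    graphEnergy c (a • u) v = a * graphEnergy c u v := by
  simp only [graphEnergy, Finset.mul_sum, Pi.smul_apply, smul_eq_mul]
  refine Finset.sum_congr rfl fun x _ => Finset.sum_congr rfl fun y _ => ?_
  ring

lemma graphEnergy_affine (a b : ℝ) (u : V → ℝ) :
    graphEnergy c (fun z => a * u z + b) (fun z => a * u z + b) = a ^ 2 * graphEnergy c u u := by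
  simp only [graphEnergy, Finset.mul_sum]
  refine Finset.sum_congr rfl fun x _ => Finset.sum_congr rfl fun y _ => ?_
  ring

lemma graphEnergy_const (b : ℝ) : graphEnergy c (fun _ => b) (fun _ => b) = 0 := by
  simp [graphEnergy]

lemma graphEnergy_self_nonneg (hc : 0 ≤ c) (u : V → ℝ) : 0 ≤ graphEnergy c u u := by
  unfold graphEnergy
  refine mul_nonneg (by norm_num) (Finset.sum_nonneg fun x _ => Finset.sum_nonneg fun y _ => ?_)
  rw [mul_assoc]
  exact mul_nonneg (hc x y) (mul_self_nonneg _)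

lemma graphEnergy_truncate_le (hc : 0 ≤ c) (u : V → ℝ) :
    graphEnergy c (fun z => max 0 (min 1 (u z))) (fun z => max 0 (min 1 (u z)))
      ≤ graphEnergy c u u := by
  unfold graphEnergy
  refine mul_le_mul_of_nonneg_left (Finset.sum_le_sum fun x _ => Finset.sum_le_sum fun y _ => ?_)
    (by norm_num)
  rw [mul_assoc, mul_assoc]
  refine mul_le_mul_of_nonneg_left ?_ (hc x y)
  rw [← abs_mul_abs_self, ← abs_mul_abs_self (u x - u y)]
  exact mul_self_le_mul_self (abs_nonneg _)
    (Set.abs_projIcc_sub_projIcc (zero_le_one' ℝ) (c := u x) (d := u y))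

lemma mul_sq_le_graphEnergy (hc : 0 ≤ c) (hsymm : ∀ x y, c x y = c y x) {x y : V} (hxy : x ≠ y)
    (u : V → ℝ) : c x y * (u x - u y) ^ 2 ≤ graphEnergy c u u := by
  classical
  set T : V × V → ℝ := fun p => c p.1 p.2 * (u p.1 - u p.2) * (u p.1 - u p.2)
  have hT : ∀ p, 0 ≤ T p := fun p => by
    simp only [T, mul_assoc]
    exact mul_nonneg (hc _ _) (mul_self_nonneg _)
  have hpair := Finset.sum_le_sum_of_subset_of_nonneg (Finset.subset_univ {(x, y), (y, x)})
    fun p _ _ => hT p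
  rw [Finset.sum_pair (by simp [hxy]), ← Finset.univ_product_univ, Finset.sum_product] at hpair
  simp only [T, hsymm y x] at hpair
  unfold graphEnergy
  nlinarith

lemma continuous_graphEnergy :
    Continuous fun p : (V → V → ℝ) × (V → ℝ) => graphEnergy p.1 p.2 p.2 := by
  unfold graphEnergy
  fun_prop

end GraphEnergy

lemma single_mem_admissible {V : Type*} [DecidableEq V] {x y : V} (hxy : x ≠ y) :
    (Pi.single x 1 : V → ℝ) ∈ Icc 0 1 ∩ {u | u x = 1 ∧ u y = 0} := by
  refine ⟨⟨fun z => ?_, fun z => ?_⟩, by simp [hxy.symm]⟩ <;>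
    by_cases hz : z = x <;> simp [hz]

section EffectiveConductance

variable {V : Type*} [Fintype V] {c : V → V → ℝ}

/-- For `x = y` no function is admissible, and the value is the junk `sInf ∅ = 0`. -/
noncomputable def effectiveConductance (c : V → V → ℝ) (x y : V) : ℝ :=
  sInf ((fun u => graphEnergy c u u) '' {u | u x = 1 ∧ u y = 0})

lemma bddBelow_graphEnergy_image (hc : 0 ≤ c) (s : Set (V → ℝ)) :
    BddBelow ((fun u => graphEnergy c u u) '' s) :=
  ⟨0, by rintro _ ⟨u, -, rfl⟩; exact graphEnergy_self_nonneg hc u⟩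

lemma effectiveConductance_mul_sq_le (hc : 0 ≤ c) (x y : V) (u : V → ℝ) :
    effectiveConductance c x y * (u x - u y) ^ 2 ≤ graphEnergy c u u := by
  rcases eq_or_ne (u x - u y) 0 with hd | hd
  · simpa [hd] using graphEnergy_self_nonneg hc u
  set v : V → ℝ := fun z => (u x - u y)⁻¹ * u z + -((u x - u y)⁻¹ * u y)
  have hv : v ∈ {u | u x = 1 ∧ u y = 0} := ⟨by simp only [v]; field_simp; ring, by simp [v]⟩
  calc effectiveConductance c x y * (u x - u y) ^ 2
      ≤ graphEnergy c v v * (u x - u y) ^ 2 := by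
        gcongr
        exact csInf_le (bddBelow_graphEnergy_image hc _) ⟨v, hv, rfl⟩
    _ = graphEnergy c u u := by rw [graphEnergy_affine]; field_simp

lemma le_effectiveConductance (hc : 0 ≤ c) (hsymm : ∀ x y, c x y = c y x) {x y : V}
    (hxy : x ≠ y) : c x y ≤ effectiveConductance c x y := by
  classical
  refine le_csInf ⟨_, _, (single_mem_admissible hxy).2, rfl⟩ ?_
  rintro _ ⟨u, ⟨hux, huy⟩, rfl⟩
  simpa [hux, huy] using mul_sq_le_graphEnergy hc hsymm hxy u

lemma effectiveConductance_eq_sInf_truncated (hc : 0 ≤ c) {x y : V} (hxy : x ≠ y) :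
    effectiveConductance c x y =
      sInf ((fun u => graphEnergy c u u) '' (Icc 0 1 ∩ {u | u x = 1 ∧ u y = 0})) := by
  classical
  refine le_antisymm
    (csInf_le_csInf (bddBelow_graphEnergy_image hc _) ⟨_, _, single_mem_admissible hxy, rfl⟩
      (image_mono inter_subset_right)) ?_
  refine le_csInf ⟨_, _, (single_mem_admissible hxy).2, rfl⟩ ?_
  rintro _ ⟨u, ⟨hux, huy⟩, rfl⟩
  refine (csInf_le (bddBelow_graphEnergy_image hc _) ⟨_, ?_, rfl⟩).trans
    (graphEnergy_truncate_le hc u)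
  refine ⟨⟨fun z => le_max_left _ _, fun z => max_le zero_le_one (min_le_left _ _)⟩, ?_⟩
  simp [hux, huy]

lemma continuousOn_effectiveConductance {x y : V} (hxy : x ≠ y) :
    ContinuousOn (fun c => effectiveConductance c x y) (Ici 0) := by
  have hK : IsCompact (Icc (0 : V → ℝ) 1 ∩ {u | u x = 1 ∧ u y = 0}) :=
    isCompact_Icc.inter_right
      ((isClosed_eq (continuous_apply x) continuous_const).inter
        (isClosed_eq (continuous_apply y) continuous_const))
  refine (hK.continuous_sInf (f := fun c u => graphEnergy c u u)
    continuous_graphEnergy).continuousOn.congr fun c hc => ?_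
  exact effectiveConductance_eq_sInf_truncated hc hxy

end EffectiveConductance

section OfConductance

variable {V : Type*} [Fintype V] [Nonempty V] {c : V → V → ℝ}

lemma graphEnergy_self_eq_zero_iff (hc : 0 ≤ c)
    (hpos : ∀ x y, x ≠ y → 0 < effectiveConductance c x y) (u : V → ℝ) :
    graphEnergy c u u = 0 ↔ ∃ a, ∀ x, u x = a := by
  constructor
  · intro h
    obtain ⟨x₀⟩ := ‹Nonempty V›
    refine ⟨u x₀, fun x => ?_⟩
    rcases eq_or_ne x x₀ with rfl | hx
    · rfl
    have hle := effectiveConductance_mul_sq_le hc x x₀ u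
    rw [h, ← mul_zero (effectiveConductance c x x₀)] at hle
    have hsq := le_antisymm (le_of_mul_le_mul_left hle (hpos x x₀ hx)) (sq_nonneg _)
    exact sub_eq_zero.1 (pow_eq_zero_iff two_ne_zero |>.1 hsq)
  · rintro ⟨a, ha⟩
    rw [show u = fun _ => a from funext ha]
    exact graphEnergy_const a

lemma graphEnergy_complete (hc : 0 ≤ c) (hpos : ∀ x y, x ≠ y → 0 < effectiveConductance c x y)
    (u : ℕ → V → ℝ)
    (hu : ∀ ε : ℝ, 0 < ε → ∃ N : ℕ, ∀ m ≥ N, ∀ n ≥ N,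
      graphEnergy c (u m - u n) (u m - u n) < ε) :
    ∃ v : V → ℝ, ∀ ε : ℝ, 0 < ε → ∃ N : ℕ, ∀ n ≥ N, graphEnergy c (v - u n) (v - u n) < ε := by
  obtain ⟨x₀⟩ := ‹Nonempty V›
  -- Energy controls differences only, so we normalise at the base point `x₀`.
  set w : ℕ → V → ℝ := fun n z => u n z - u n x₀
  have hw : ∀ z, CauchySeq fun n => w n z := by
    intro z
    rw [Metric.cauchySeq_iff]
    intro ε hε
    rcases eq_or_ne z x₀ with rfl | hz
    · exact ⟨0, fun m _ n _ => by simpa [w] using hε⟩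
    have hz₀ := hpos z x₀ hz
    obtain ⟨N, hN⟩ := hu (effectiveConductance c z x₀ * ε ^ 2) (by positivity)
    refine ⟨N, fun m hm n hn => ?_⟩
    have h := (effectiveConductance_mul_sq_le hc z x₀ (u m - u n)).trans_lt (hN m hm n hn)
    rw [Real.dist_eq]
    refine abs_lt_of_sq_lt_sq ?_ hε.le
    have hdiff : w m z - w n z = (u m - u n) z - (u m - u n) x₀ := by
      simp only [w, Pi.sub_apply]
      ring
    rw [hdiff]
    exact lt_of_mul_lt_mul_left h hz₀.le
  choose v hv using fun z => cauchySeq_tendsto_of_complete (hw z)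
  refine ⟨v, fun ε hε => eventually_atTop.1 ?_⟩
  have hlim : Tendsto (fun n => graphEnergy c (v - w n) (v - w n)) atTop (𝓝 0) := by
    have hvw : Tendsto (fun n => v - w n) atTop (𝓝 0) :=
      tendsto_pi_nhds.2 fun z => by simpa using (hv z).const_sub (v z)
    rw [← graphEnergy_const (c := c) 0]
    exact ((continuous_graphEnergy.comp (continuous_const.prodMk continuous_id)).tendsto 0).comp
      hvw
  refine (hlim.eventually (gt_mem_nhds hε)).mono fun n hn => ?_
  have hshift : v - w n = fun z => 1 * (v - u n) z + u n x₀ := by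
    funext z
    simp only [w, Pi.sub_apply]
    ring
  rwa [hshift, graphEnergy_affine, one_pow, one_mul] at hn

variable [DecidableEq V]

noncomputable def ResistanceForm.ofConductance (c : V → V → ℝ) (hc : 0 ≤ c)
    (hpos : ∀ x y, x ≠ y → 0 < effectiveConductance c x y) : ResistanceForm V where
  F := univ
  E := graphEnergy c
  zero_mem := mem_univ _
  add_mem _ _ := mem_univ _
  smul_mem _ _ _ := mem_univ _
  const_mem _ := mem_univ _
  symm u _ v _ := graphEnergy_comm u v
  add_left u _ v _ w _ := graphEnergy_add_left u v w
  smul_left a u _ v _ := graphEnergy_smul_left a u v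
  nonneg u _ := graphEnergy_self_nonneg hc u
  null_iff_const u _ := graphEnergy_self_eq_zero_iff hc hpos u
  complete u _ hu := by
    obtain ⟨v, hv⟩ := graphEnergy_complete hc hpos u hu
    exact ⟨v, mem_univ v, hv⟩
  sep x y hxy := ⟨Pi.single x 1, mem_univ _, by simp [hxy.symm]⟩
  exists_unit x y hxy := ⟨Pi.single x 1, mem_univ _, by simp [hxy.symm]⟩
  inf_pos x y hxy := by simpa [effectiveConductance, image, and_assoc] using hpos x y hxy
  markov u _ := ⟨mem_univ _, graphEnergy_truncate_le hc u⟩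

lemma ResistanceForm.rmetric_ofConductance (hc : 0 ≤ c)
    (hpos : ∀ x y, x ≠ y → 0 < effectiveConductance c x y) {x y : V} (hxy : x ≠ y) :
    (ofConductance c hc hpos).rmetric x y = (effectiveConductance c x y)⁻¹ := by
  simp [rmetric, ofConductance, effectiveConductance, hxy, image, and_assoc]

end OfConductance

namespace ResistanceForm

section FullDomain

variable {X : Type*} (rf : ResistanceForm X) (hF : rf.F = univ)

lemma rmetric_self (x : X) : rf.rmetric x x = 0 := if_pos rfl

include hF

lemma mem_F (u : X → ℝ) : u ∈ rf.F := hF ▸ mem_univ u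

lemma E_comm (u v : X → ℝ) : rf.E u v = rf.E v u :=
  rf.symm u (rf.mem_F hF u) v (rf.mem_F hF v)

lemma E_add_left (u v w : X → ℝ) : rf.E (u + v) w = rf.E u w + rf.E v w :=
  rf.add_left u (rf.mem_F hF u) v (rf.mem_F hF v) w (rf.mem_F hF w)

lemma E_smul_left (a : ℝ) (u v : X → ℝ) : rf.E (a • u) v = a * rf.E u v :=
  rf.smul_left a u (rf.mem_F hF u) v (rf.mem_F hF v)

def toBilinForm : LinearMap.BilinForm ℝ (X → ℝ) :=
  LinearMap.mk₂ ℝ rf.E (rf.E_add_left hF) (rf.E_smul_left hF)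
    (fun u v w => by simp only [rf.E_comm hF u, rf.E_add_left hF])
    (fun a u v => by simp only [rf.E_comm hF u, rf.E_smul_left hF, smul_eq_mul])

lemma toBilinForm_apply (u v : X → ℝ) : rf.toBilinForm hF u v = rf.E u v := rfl

lemma E_const_right (u : X → ℝ) (a : ℝ) : rf.E u (fun _ => a) = 0 := by
  have hconst : rf.E (fun _ => a) (fun _ => a) = 0 :=
    (rf.null_iff_const _ (rf.mem_F hF _)).2 ⟨a, fun _ => rfl⟩
  -- `t ↦ E(u + t a, u + t a)` is a nonnegative polynomial of degree `≤ 1`, so it is constant.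
  have hdiscr : discrim 0 (2 * rf.E u (fun _ => a)) (rf.E u u) ≤ 0 := by
    refine discrim_le_zero fun t => ?_
    have := rf.nonneg _ (rf.mem_F hF (u + t • fun _ => a))
    simp only [← rf.toBilinForm_apply hF, map_add, map_smul, LinearMap.add_apply,
      LinearMap.smul_apply, smul_eq_mul] at this
    simp only [toBilinForm_apply, hconst, rf.E_comm hF (fun _ => a) u] at this
    linarith
  rw [discrim] at hdiscr
  nlinarith

end FullDomain

section Finite

variable {V : Type*} [DecidableEq V] (rf : ResistanceForm V)

noncomputable def conductance (x y : V) : ℝ :=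
  if x = y then 0 else -rf.E (Pi.single x 1) (Pi.single y 1)

variable (hF : rf.F = univ)
include hF

lemma conductance_symm (x y : V) : rf.conductance x y = rf.conductance y x := by
  rcases eq_or_ne x y with rfl | hxy
  · rfl
  simp only [conductance, hxy, hxy.symm, if_false, rf.E_comm hF (Pi.single x 1)]

lemma E_single_single_nonpos {x y : V} (hxy : x ≠ y) :
    rf.E (Pi.single x 1) (Pi.single y 1) ≤ 0 := by
  set b := rf.E (Pi.single x 1) (Pi.single y 1)
  set d := rf.E (Pi.single y 1) (Pi.single y 1)
  -- The unit truncation of `1ₓ - ε 1_y` is `1ₓ`, so the Markov property bounds `2 b ≤ ε d`.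
  have key : ∀ ε > 0, 2 * b ≤ ε * d := by
    intro ε hε
    have htrunc : (fun z => max 0 (min 1 ((Pi.single x 1 - ε • Pi.single y 1 : V → ℝ) z)))
        = Pi.single x 1 := by
      funext z
      rcases eq_or_ne z x with rfl | hzx
      · simp [hxy]
      rcases eq_or_ne z y with rfl | hzy
      · simp [hzx, hε.le]
      · simp [hzx, hzy]
    have hmarkov := (rf.markov _ (rf.mem_F hF (Pi.single x 1 - ε • Pi.single y 1))).2
    rw [htrunc] at hmarkov
    simp only [← rf.toBilinForm_apply hF, map_sub, map_smul, LinearMap.sub_apply,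
      LinearMap.smul_apply, smul_eq_mul] at hmarkov
    simp only [toBilinForm_apply, rf.E_comm hF (Pi.single y 1)] at hmarkov
    nlinarith
  by_contra! hb
  have hd : 0 ≤ d := rf.nonneg _ (rf.mem_F hF _)
  have h := key (b / (d + 1)) (by positivity)
  have : b / (d + 1) * d < b := by
    rw [div_mul_eq_mul_div, div_lt_iff₀ (by positivity)]
    nlinarith
  linarith

lemma conductance_nonneg : 0 ≤ rf.conductance := fun x y => by
  unfold conductance
  split_ifs with hxy
  · exact le_rfl
  · exact neg_nonneg.2 (rf.E_single_single_nonpos hF hxy)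

variable [Fintype V]

lemma E_eq_graphEnergy (u : V → ℝ) : rf.E u u = graphEnergy rf.conductance u u := by
  set M := LinearMap.toMatrix₂' ℝ (rf.toBilinForm hF)
  have hM : ∀ i j, M i j = rf.E (Pi.single i 1) (Pi.single j 1) := fun _ _ => rfl
  have hrow : ∀ i, ∑ j, M i j = 0 := fun i => by
    simp only [hM, ← toBilinForm_apply rf hF, ← map_sum, Finset.univ_sum_single]
    exact rf.E_const_right hF _ 1
  have hcol : ∀ j, ∑ i, M i j = 0 := fun j => by
    simpa only [hM, rf.E_comm hF (Pi.single j 1)] using hrow j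
  have hterm : ∀ i j, rf.conductance i j * (u i - u j) * (u i - u j)
      = 2 * (u i * u j * M i j) - u i ^ 2 * M i j - u j ^ 2 * M i j := fun i j => by
    rcases eq_or_ne i j with rfl | hij
    · simp [conductance]
      ring
    · simp only [conductance, hij, if_false, hM]
      ring
  have hsum_left : ∑ i, ∑ j, u i ^ 2 * M i j = 0 := by
    simp [← Finset.mul_sum, hrow]
  have hsum_right : ∑ i, ∑ j, u j ^ 2 * M i j = 0 := by
    rw [Finset.sum_comm]
    simp [← Finset.mul_sum, hcol]
  have hsplit : ∑ i, ∑ j, rf.conductance i j * (u i - u j) * (u i - u j)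
      = 2 * ∑ i, ∑ j, u i * u j * M i j := by
    simp only [hterm, Finset.sum_sub_distrib, hsum_left, hsum_right, sub_zero, Finset.mul_sum]
  rw [graphEnergy, hsplit, ← toBilinForm_apply rf hF,
    ← Matrix.toLinearMap₂'_toMatrix' (R := ℝ) (rf.toBilinForm hF), Matrix.toLinearMap₂'_apply]
  simp only [smul_eq_mul, ← mul_assoc, M]
  ring

lemma rmetric_eq_inv_effectiveConductance {x y : V} (hxy : x ≠ y) :
    rf.rmetric x y = (effectiveConductance rf.conductance x y)⁻¹ := by
  simp [rmetric, effectiveConductance, hxy, image, and_assoc, hF, ← rf.E_eq_graphEnergy hF]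

lemma conductance_le_inv_rmetric (x y : V) : rf.conductance x y ≤ (rf.rmetric x y)⁻¹ := by
  rcases eq_or_ne x y with rfl | hxy
  · simp [conductance, rmetric_self]
  rw [rf.rmetric_eq_inv_effectiveConductance hF hxy, inv_inv]
  exact le_effectiveConductance (rf.conductance_nonneg hF) (rf.conductance_symm hF) hxy

end Finite

end ResistanceForm

/-- Let `V` be a nonempty finite set and `(E_n, ℓ(V))` resistance forms
on `V` (with full domain) whose resistance metrics `R_n` converge pointwise, for `x ≠ y`,
to a positive limit `R(x,y)`.  Then there exists a resistance form `(E, ℓ(V))` on `V`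
whose resistance metric coincides with `R` (extended by `R(x,x) = 0`). -/
theorem exists_resistanceForm_of_tendsto_rmetric {V : Type*} [Finite V] [Nonempty V]
    (rfn : ℕ → ResistanceForm V) (hFn : ∀ n, (rfn n).F = Set.univ)
    (R : V → V → ℝ)
    (hlim : ∀ x y : V, x ≠ y → 0 < R x y ∧
      Tendsto (fun n => (rfn n).rmetric x y) atTop (𝓝 (R x y)))
    (hdiag : ∀ x : V, R x x = 0) :
    ∃ rf : ResistanceForm V, rf.F = Set.univ ∧ ∀ x y : V, rf.rmetric x y = R x y := by
  classical
  cases nonempty_fintype V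
  set c : ℕ → V → V → ℝ := fun n => (rfn n).conductance
  have hinv : ∀ x y, Tendsto (fun n => ((rfn n).rmetric x y)⁻¹) atTop (𝓝 (R x y)⁻¹) := by
    intro x y
    rcases eq_or_ne x y with rfl | hxy
    · simp [ResistanceForm.rmetric_self, hdiag]
    · exact (hlim x y hxy).2.inv₀ (hlim x y hxy).1.ne'
  choose B hB using fun x y => (hinv x y).bddAbove_range
  have hcB : ∀ n, c n ∈ Icc 0 B := fun n =>
    ⟨(rfn n).conductance_nonneg (hFn n), fun x y =>
      ((rfn n).conductance_le_inv_rmetric (hFn n) x y).trans (hB x y (mem_range_self n))⟩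
  obtain ⟨c₀, hc₀, φ, hφ, hcφ⟩ := isCompact_Icc.tendsto_subseq hcB
  have heff : ∀ x y, x ≠ y → effectiveConductance c₀ x y = (R x y)⁻¹ := by
    intro x y hxy
    have hcont := ((continuousOn_effectiveConductance hxy).continuousWithinAt hc₀.1).tendsto.comp
      (tendsto_nhdsWithin_iff.2 ⟨hcφ, .of_forall fun k => (hcB (φ k)).1⟩)
    refine tendsto_nhds_unique hcont ?_
    simpa only [Function.comp_def, c, (rfn _).rmetric_eq_inv_effectiveConductance (hFn _) hxy,
      inv_inv]
      using (hinv x y).comp hφ.tendsto_atTop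
  have hpos : ∀ x y, x ≠ y → 0 < effectiveConductance c₀ x y := fun x y hxy =>
    heff x y hxy ▸ inv_pos.2 (hlim x y hxy).1
  refine ⟨.ofConductance c₀ hc₀.1 hpos, rfl, fun x y => ?_⟩
  rcases eq_or_ne x y with rfl | hxy
  · rw [ResistanceForm.rmetric_self, hdiag]
  · rw [ResistanceForm.rmetric_ofConductance _ _ hxy, heff x y hxy, inv_inv]
end
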